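/- For all integers m ≥ 1 and 1 ≤ n ≤ m, the Menger continuum M^m_n is a connected subset of ℝ^m (so, being also compact and nonempty, it is a continuum). -/

import Mathlib

/-- The Menger continuum `M^m_n`: points admitting a triadic digit expansion in which, at
every level, at most `n` digits equal `1`. -/
def mengerSet (m n : ℕ) : Set (Fin m → ℝ) :=
  {x | ∃ a : ℕ → Fin m → Fin 3,
    (∀ i, x i = ∑' k : ℕ, ((a k i : ℕ) : ℝ) / 3 ^ (k + 1)) ∧
    ∀ k, ({i | a k i = 1} : Set (Fin m)).ncard ≤ n}

open Set

/-- value of one digit term -/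
noncomputable def dterm (b : ℕ → Fin 3) (k : ℕ) : ℝ := ((b k : ℕ) : ℝ) / 3 ^ (k + 1)

lemma dterm_nonneg (b : ℕ → Fin 3) (k : ℕ) : 0 ≤ dterm b k := by
  unfold dterm; positivity

lemma dterm_le (b : ℕ → Fin 3) (k : ℕ) : dterm b k ≤ 2 / 3 ^ (k + 1) := by
  unfold dterm
  gcongr
  have := (b k).is_lt
  exact_mod_cast Nat.lt_succ_iff.mp this

lemma summable_geom3 : Summable (fun k : ℕ => 2 / 3 ^ (k + 1) : ℕ → ℝ) := by
  have : Summable (fun k : ℕ => (1/3 : ℝ) ^ k) :=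
    summable_geometric_of_lt_one (by norm_num) (by norm_num)
  have h2 := (this.mul_left (2/3 : ℝ))
  refine h2.congr fun k => ?_
  rw [pow_succ, div_pow, one_pow]
  ring

lemma tsum_geom3 : (∑' k : ℕ, (2 / 3 ^ (k + 1) : ℝ)) = 1 := by
  have h : (∑' k : ℕ, ((1/3 : ℝ)) ^ k) = (1 - 1/3)⁻¹ :=
    tsum_geometric_of_lt_one (by norm_num) (by norm_num)
  have : (fun k : ℕ => (2 / 3 ^ (k + 1) : ℝ)) = fun k => (2/3) * (1/3) ^ k := by
    funext k; rw [pow_succ, div_pow, one_pow]; ring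
  rw [this, tsum_mul_left, h]
  norm_num

lemma summable_dterm (b : ℕ → Fin 3) : Summable (dterm b) :=
  Summable.of_nonneg_of_le (dterm_nonneg b) (dterm_le b) summable_geom3

lemma dsum_nonneg (b : ℕ → Fin 3) : 0 ≤ ∑' k, dterm b k :=
  tsum_nonneg (dterm_nonneg b)

lemma dsum_le_one (b : ℕ → Fin 3) : ∑' k, dterm b k ≤ 1 := by
  rw [← tsum_geom3]
  exact Summable.tsum_le_tsum (dterm_le b) (summable_dterm b) summable_geom3

lemma dsum_two : (∑' k, dterm (fun _ => 2) k) = 1 := by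
  rw [← tsum_geom3]
  congr 1

lemma dsum_zero : (∑' k, dterm (fun _ => 0) k) = 0 := by
  convert tsum_zero with k
  simp [dterm]

noncomputable def fdig (t : ℝ) : Fin 3 :=
  ⟨min 2 (⌊3*t⌋.toNat), by omega⟩

noncomputable def rstep (t : ℝ) : ℝ := 3*t - ((fdig t : ℕ) : ℝ)

lemma fdig_le (t : ℝ) (ht : t ∈ Icc (0:ℝ) 1) : ((fdig t : ℕ) : ℝ) ≤ 3*t := by
  obtain ⟨h0, h1⟩ := ht
  have h3 : (0:ℝ) ≤ 3*t := by linarith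
  simp only [fdig]
  rcases le_or_gt (⌊3*t⌋.toNat) 2 with h | h
  · rw [min_eq_right h]
    have : ((⌊3*t⌋.toNat : ℤ) : ℝ) ≤ 3*t := by
      rw [Int.toNat_of_nonneg (Int.floor_nonneg.mpr h3)]
      exact Int.floor_le _
    exact_mod_cast this
  · rw [min_eq_left (le_of_lt h)]
    have : ((3:ℤ) : ℝ) ≤ 3*t := by
      calc ((3:ℤ):ℝ) ≤ ((⌊3*t⌋.toNat : ℤ) : ℝ) := by exact_mod_cast h
      _ ≤ 3*t := by
          rw [Int.toNat_of_nonneg (Int.floor_nonneg.mpr h3)]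
          exact Int.floor_le _
    push_cast at this ⊢
    linarith

lemma rstep_mem (t : ℝ) (ht : t ∈ Icc (0:ℝ) 1) : rstep t ∈ Icc (0:ℝ) 1 := by
  obtain ⟨h0, h1⟩ := ht
  have h3 : (0:ℝ) ≤ 3*t := by linarith
  constructor
  · have := fdig_le t ⟨h0, h1⟩
    unfold rstep; linarith
  · unfold rstep
    simp only [fdig]
    rcases le_or_gt (⌊3*t⌋.toNat) 2 with h | h
    · rw [min_eq_right h]
      have : 3*t < ((⌊3*t⌋.toNat : ℤ) : ℝ) + 1 := by
        rw [Int.toNat_of_nonneg (Int.floor_nonneg.mpr h3)]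
        exact Int.lt_floor_add_one _
      push_cast at this ⊢
      linarith
    · rw [min_eq_left (le_of_lt h)]
      push_cast
      linarith

lemma exists_digits (t : ℝ) (ht : t ∈ Icc (0:ℝ) 1) :
    ∃ b : ℕ → Fin 3, t = ∑' k, dterm b k := by
  set b : ℕ → Fin 3 := fun k => fdig (rstep^[k] t) with hb
  have hmem : ∀ k, rstep^[k] t ∈ Icc (0:ℝ) 1 := by
    intro k
    induction k with
    | zero => simpa using ht
    | succ k ih => rw [Function.iterate_succ_apply']; exact rstep_mem _ ih
  have key : ∀ K : ℕ, t - ∑ k ∈ Finset.range K, dterm b k = (rstep^[K] t) / 3 ^ K := by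
    intro K
    induction K with
    | zero => simp
    | succ K ih =>
        rw [Finset.sum_range_succ, Function.iterate_succ_apply']
        have hbK : dterm b K = ((fdig (rstep^[K] t) : ℕ) : ℝ) / 3 ^ (K+1) := rfl
        have hstep : rstep (rstep^[K] t) = 3 * (rstep^[K] t) - ((fdig (rstep^[K] t) : ℕ):ℝ) := rfl
        rw [hbK, hstep]
        set u := rstep^[K] t
        set c := ((fdig u : ℕ) : ℝ)
        have huc : (3*u - c)/3^(K+1) = u/3^K - c/3^(K+1) := by
          field_simp; ring
        rw [huc]; linarith
  have h1 : Filter.Tendsto (fun K => ∑ k ∈ Finset.range K, dterm b k)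
      Filter.atTop (nhds (∑' k, dterm b k)) :=
    (summable_dterm b).hasSum.tendsto_sum_nat
  have h2 : Filter.Tendsto (fun K => ∑ k ∈ Finset.range K, dterm b k)
      Filter.atTop (nhds t) := by
    have hsq : Filter.Tendsto (fun K : ℕ => t - (rstep^[K] t) / 3 ^ K)
        Filter.atTop (nhds t) := by
      have hz : Filter.Tendsto (fun K : ℕ => (rstep^[K] t) / 3 ^ K)
          Filter.atTop (nhds 0) := by
        apply squeeze_zero (fun K => div_nonneg (hmem K).1 (by positivity))
          (fun K => by
            have := (hmem K).2
            calc (rstep^[K] t) / 3 ^ K ≤ 1 / 3 ^ K := by gcongr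
            _ = (1/3 : ℝ) ^ K := by rw [div_pow]; norm_num)
        exact tendsto_pow_atTop_nhds_zero_of_lt_one (by norm_num) (by norm_num)
      simpa using (tendsto_const_nhds (x := t)).sub hz
    have : (fun K : ℕ => t - (rstep^[K] t) / 3 ^ K)
        = fun K => ∑ k ∈ Finset.range K, dterm b k := by
      funext K
      have := key K
      linarith
    rwa [this] at hsq
  exact ⟨b, tendsto_nhds_unique h2 h1⟩

def goodv (m n : ℕ) (v : Fin m → Fin 3) : Prop := ({i | v i = 1} : Set (Fin m)).ncard ≤ n

def S (m n k : ℕ) : Set (Fin m → ℝ) :=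
  {x | ∃ a : ℕ → Fin m → Fin 3,
    (∀ i, x i = ∑' j : ℕ, ((a j i : ℕ) : ℝ) / 3 ^ (j + 1)) ∧
    ∀ j < k, goodv m n (a j)}

lemma S_zero (m n : ℕ) : S m n 0 = Set.pi Set.univ (fun _ : Fin m => Icc (0:ℝ) 1) := by
  ext x
  constructor
  · rintro ⟨a, ha, -⟩ i -
    rw [ha i]
    exact ⟨dsum_nonneg (fun j => a j i), dsum_le_one (fun j => a j i)⟩
  · intro hx
    choose b hbb using fun i => exists_digits (x i) (hx i (mem_univ i))
    exact ⟨fun j i => b i j, fun i => hbb i, fun j hj => absurd hj (Nat.not_lt_zero j)⟩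

lemma S_antitone (m n k : ℕ) : S m n (k+1) ⊆ S m n k := by
  rintro x ⟨a, h1, h2⟩
  exact ⟨a, h1, fun j hj => h2 j (Nat.lt_succ_of_lt hj)⟩

/-- the contraction map associated to digit vector `v` -/
noncomputable def phi {m : ℕ} (v : Fin m → Fin 3) (x : Fin m → ℝ) : Fin m → ℝ :=
  fun i => (((v i : ℕ) : ℝ) + x i) / 3

lemma continuous_phi {m : ℕ} (v : Fin m → Fin 3) : Continuous (phi v) := by
  unfold phi
  exact continuous_pi fun i => ((continuous_const.add (continuous_apply i)).div_const 3)

lemma S_succ (m n k : ℕ) :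
    S m n (k+1) = ⋃ v ∈ {v : Fin m → Fin 3 | goodv m n v}, phi v '' S m n k := by
  ext x
  constructor
  · rintro ⟨a, h1, h2⟩
    refine mem_biUnion (h2 0 (Nat.succ_pos k)) ?_
    refine ⟨fun i => ∑' j : ℕ, ((a (j+1) i : ℕ) : ℝ) / 3 ^ (j + 1), ?_, ?_⟩
    · exact ⟨fun j => a (j+1), fun i => rfl, fun j hj => h2 (j+1) (Nat.succ_lt_succ hj)⟩
    · funext i
      rw [h1 i]
      unfold phi
      beta_reduce
      have hs : Summable (fun j : ℕ => (((a j i : ℕ)) : ℝ) / 3 ^ (j+1)) :=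
        summable_dterm (fun j => a j i)
      rw [Summable.tsum_eq_zero_add hs]
      have : ∀ j : ℕ, ((a (j+1) i : ℕ) : ℝ) / 3 ^ (j + 1 + 1)
          = (1/3) * (((a (j+1) i : ℕ) : ℝ) / 3 ^ (j + 1)) := by
        intro j
        rw [pow_succ]
        ring
      rw [tsum_congr this, tsum_mul_left]
      field_simp
      ring
  · intro hx
    rw [mem_iUnion₂] at hx
    obtain ⟨v, hv, y, ⟨a, h1, h2⟩, rfl⟩ := hx
    refine ⟨fun j => if j = 0 then v else a (j-1), fun i => ?_, fun j hj => ?_⟩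
    · unfold phi
      rw [h1 i]
      have hsum : Summable (fun j : ℕ =>
          (((if j = 0 then v else a (j-1)) i : ℕ) : ℝ) / 3 ^ (j+1)) :=
        summable_dterm (fun j => (if j = 0 then v else a (j-1)) i)
      rw [Summable.tsum_eq_zero_add hsum]
      simp only [if_pos rfl]
      have : ∀ j : ℕ, (((if j + 1 = 0 then v else a (j+1-1)) i : ℕ) : ℝ) / 3 ^ (j + 1 + 1)
          = (1/3) * (((a j i : ℕ) : ℝ) / 3 ^ (j + 1)) := by
        intro j
        simp only [Nat.succ_ne_zero, if_false, Nat.add_sub_cancel]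
        rw [pow_succ]
        ring
      rw [tsum_congr this, tsum_mul_left]
      field_simp
      simp only [↓reduceIte]
      ring
    · rcases Nat.eq_zero_or_pos j with rfl | hj0
      · simpa using hv
      · simp only [Nat.pos_iff_ne_zero.mp hj0, if_false]
        exact h2 (j-1) (by omega)

lemma zero_mem_S (m n k : ℕ) : (0 : Fin m → ℝ) ∈ S m n k := by
  refine ⟨fun _ _ => 0, fun i => ?_, fun j _ => ?_⟩
  · simp
  · simp only [goodv]
    convert Nat.zero_le n
    rw [Set.ncard_eq_zero]
    ext i; simp [Fin.ext_iff]

noncomputable def epoint {m : ℕ} (i : Fin m) : Fin m → ℝ := fun i' => if i' = i then 1 else 0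

lemma epoint_mem_S (m n k : ℕ) (i : Fin m) : epoint i ∈ S m n k := by
  refine ⟨fun _ i' => if i' = i then 2 else 0, fun i' => ?_, fun j _ => ?_⟩
  · unfold epoint
    by_cases h : i' = i
    · simp only [if_pos h]
      rw [← dsum_two]
      rfl
    · simp only [if_neg h]
      rw [← dsum_zero]
      rfl
  · simp only [goodv]
    convert Nat.zero_le n
    rw [Set.ncard_eq_zero]
    ext i'
    simp only [Set.mem_setOf_eq, Set.mem_empty_iff_false, iff_false]
    split <;> decide

lemma S_isCompact (m n k : ℕ) : IsCompact (S m n k) := by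
  induction k with
  | zero =>
      rw [S_zero]
      exact isCompact_univ_pi (fun _ => isCompact_Icc)
  | succ k ih =>
      rw [S_succ]
      exact Set.Finite.isCompact_biUnion (Set.toFinite _)
        (fun v _ => ih.image (continuous_phi v))

lemma sum_update_add (m : ℕ) (v : Fin m → Fin 3) (i : Fin m) (d : Fin 3) :
    (∑ j, ((Function.update v i d j : Fin 3) : ℕ)) + (v i : ℕ)
      = (∑ j, ((v j : ℕ))) + (d : ℕ) := by
  rw [← Finset.sum_erase_add Finset.univ (fun j => ((Function.update v i d j : Fin 3) : ℕ))
        (Finset.mem_univ i),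
      ← Finset.sum_erase_add Finset.univ (fun j => ((v j : ℕ))) (Finset.mem_univ i)]
  have : ∑ j ∈ Finset.univ.erase i, ((Function.update v i d j : Fin 3) : ℕ)
      = ∑ j ∈ Finset.univ.erase i, ((v j : ℕ)) := by
    apply Finset.sum_congr rfl
    intro j hj
    rw [Function.update_apply, if_neg (Finset.mem_erase.mp hj).1]
  rw [this, Function.update_apply, if_pos rfl]
  omega

lemma phi_image_subset (m n k : ℕ) {v : Fin m → Fin 3} (hv : goodv m n v) :
    phi v '' S m n k ⊆ S m n (k+1) := by
  rw [S_succ]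
  exact subset_biUnion_of_mem (u := fun v => phi v '' S m n k) hv

lemma phi_zero_eq {m : ℕ} {v : Fin m → Fin 3} {i : Fin m} (hvi : (v i : ℕ) ≠ 0) :
    phi v 0 = phi (Function.update v i ⟨(v i : ℕ) - 1, by omega⟩) (epoint i) := by
  funext j
  unfold phi epoint
  by_cases h : j = i
  · subst h
    rw [Function.update_apply, if_pos rfl, if_pos rfl]
    have : (v j : ℕ) - 1 + 1 = (v j : ℕ) := by omega
    simp only [Pi.zero_apply]
    push_cast [this]
    congr 1
    rw [add_zero]
    norm_cast
    omega
  · rw [Function.update_apply, if_neg h, if_neg h]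
    simp

lemma S_isConnected (m n : ℕ) (hn : 1 ≤ n) (k : ℕ) : IsConnected (S m n k) := by
  induction k with
  | zero =>
      rw [S_zero]
      exact ⟨⟨0, fun i _ => by simp⟩,
        (convex_pi (fun i _ => convex_Icc (0:ℝ) 1)).isPreconnected⟩
  | succ k ih =>
      set F := S m n (k+1) with hF
      have h0F : (0 : Fin m → ℝ) ∈ F := zero_mem_S m n (k+1)
      have main : ∀ N : ℕ, ∀ v : Fin m → Fin 3, goodv m n v → (∑ j, ((v j : ℕ))) = N →
          phi v '' S m n k ⊆ connectedComponentIn F 0 := by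
        intro N
        induction N using Nat.strong_induction_on with
        | _ N IH =>
          intro v hv hN
          have hpre : IsPreconnected (phi v '' S m n k) :=
            ih.isPreconnected.image _ (continuous_phi v).continuousOn
          have hsub : phi v '' S m n k ⊆ F := phi_image_subset m n k hv
          by_cases h1 : ∃ i, v i = 1
          · obtain ⟨i, hi⟩ := h1
            have hvi : (v i : ℕ) ≠ 0 := by rw [hi]; decide
            set w := Function.update v i (⟨(v i : ℕ) - 1, by omega⟩ : Fin 3) with hw
            have hwgood : goodv m n w := by
              refine le_trans (Set.ncard_le_ncard ?_ (Set.toFinite _)) hv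
              intro j hj
              simp only [Set.mem_setOf_eq] at hj ⊢
              by_cases hji : j = i
              · exfalso
                subst hji
                rw [hw, Function.update_self] at hj
                have hv1 : (v j : ℕ) = 1 := by rw [hi]; rfl
                have := congrArg Fin.val hj
                simp at this
                omega
              · rwa [hw, Function.update_of_ne hji] at hj
            have hwsum : (∑ j, ((w j : ℕ))) < N := by
              have := sum_update_add m v i (⟨(v i : ℕ) - 1, by omega⟩ : Fin 3)
              rw [← hw] at this
              simp only at this
              omega
            have hIH := IH (∑ j, ((w j : ℕ))) hwsum w hwgood rfl
            have hz : phi v 0 ∈ connectedComponentIn F 0 := by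
              rw [phi_zero_eq hvi, ← hw]
              exact hIH ⟨epoint i, epoint_mem_S m n k i, rfl⟩
            calc phi v '' S m n k
                ⊆ connectedComponentIn F (phi v 0) :=
                  hpre.subset_connectedComponentIn ⟨0, zero_mem_S m n k, rfl⟩ hsub
              _ = connectedComponentIn F 0 := (connectedComponentIn_eq hz).symm
          · by_cases h2 : ∃ i, v i = 2
            · obtain ⟨i, hi⟩ := h2
              have hvi : (v i : ℕ) ≠ 0 := by rw [hi]; decide
              set w := Function.update v i (⟨(v i : ℕ) - 1, by omega⟩ : Fin 3) with hw
              have hwset : {j | w j = 1} = ({i} : Set (Fin m)) := by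
                ext j
                simp only [Set.mem_setOf_eq, Set.mem_singleton_iff]
                constructor
                · intro hj
                  by_contra hji
                  rw [hw, Function.update_of_ne hji] at hj
                  exact h1 ⟨j, hj⟩
                · intro hj
                  subst hj
                  rw [hw, Function.update_self]
                  have hv2 : (v j : ℕ) = 2 := by rw [hi]; rfl
                  apply Fin.ext
                  simp [hv2]
              have hwgood : goodv m n w := by
                unfold goodv
                rw [hwset, Set.ncard_singleton]
                exact hn
              have hwsum : (∑ j, ((w j : ℕ))) < N := by
                have := sum_update_add m v i (⟨(v i : ℕ) - 1, by omega⟩ : Fin 3)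
                rw [← hw] at this
                simp only at this
                omega
              have hIH := IH (∑ j, ((w j : ℕ))) hwsum w hwgood rfl
              have hz : phi v 0 ∈ connectedComponentIn F 0 := by
                rw [phi_zero_eq hvi, ← hw]
                exact hIH ⟨epoint i, epoint_mem_S m n k i, rfl⟩
              calc phi v '' S m n k
                  ⊆ connectedComponentIn F (phi v 0) :=
                    hpre.subset_connectedComponentIn ⟨0, zero_mem_S m n k, rfl⟩ hsub
                _ = connectedComponentIn F 0 := (connectedComponentIn_eq hz).symm
            · have hv0 : ∀ j, v j = 0 := by
                intro j
                push_neg at h1 h2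
                have hall : ∀ u : Fin 3, u ≠ 1 → u ≠ 2 → u = 0 := by decide
                exact hall _ (h1 j) (h2 j)
              have h0 : phi v 0 = 0 := by
                funext j
                unfold phi
                rw [hv0 j]
                simp
              refine hpre.subset_connectedComponentIn ?_ hsub
              rw [← h0]
              exact ⟨0, zero_mem_S m n k, rfl⟩
      have hFsub : F ⊆ connectedComponentIn F 0 := by
        intro x hx
        have hx2 : x ∈ ⋃ v ∈ {v : Fin m → Fin 3 | goodv m n v}, phi v '' S m n k := by
          rw [← S_succ]
          exact hx
        rw [mem_iUnion₂] at hx2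
        obtain ⟨v, hv, hxv⟩ := hx2
        exact main _ v hv rfl hxv
      have hEq : F = connectedComponentIn F 0 :=
        le_antisymm hFsub (connectedComponentIn_subset F 0)
      rw [hF] at hEq ⊢
      rw [hEq]
      exact isConnected_connectedComponentIn_iff.mpr h0F

lemma menger_eq_iInter (m n : ℕ) : mengerSet m n = ⋂ k, S m n k := by
  ext x
  constructor
  · rintro ⟨a, h1, h2⟩
    rw [Set.mem_iInter]
    exact fun k => ⟨a, h1, fun j _ => h2 j⟩
  · intro hx
    rw [Set.mem_iInter] at hx
    set D := ℕ → Fin m → Fin 3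
    set C : ℕ → Set D := fun k =>
      {a : D | (∀ i, x i = ∑' j : ℕ, ((a j i : ℕ) : ℝ) / 3 ^ (j + 1)) ∧
        ∀ j < k, goodv m n (a j)} with hC
    have hnested : ∀ k, C (k+1) ⊆ C k := by
      rintro k a ⟨ha1, ha2⟩
      exact ⟨ha1, fun j hj => ha2 j (Nat.lt_succ_of_lt hj)⟩
    have hne : ∀ k, (C k).Nonempty := by
      intro k
      obtain ⟨a, h1, h2⟩ := hx k
      exact ⟨a, h1, h2⟩
    have hcont : ∀ i : Fin m, Continuous
        (fun a : D => ∑' j : ℕ, ((a j i : ℕ) : ℝ) / 3 ^ (j + 1)) := by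
      intro i
      apply continuous_tsum (u := fun j : ℕ => (2 / 3 ^ (j+1) : ℝ))
      · intro j
        have h1 : Continuous (fun a : D => a j i) :=
          (continuous_apply i).comp (continuous_apply j)
        exact (continuous_of_discreteTopology
          (f := fun d : Fin 3 => ((d : ℕ) : ℝ) / 3 ^ (j+1))).comp h1
      · exact summable_geom3
      · intro j a
        have h0 : (0:ℝ) ≤ ((a j i : ℕ) : ℝ) / 3 ^ (j + 1) := by positivity
        rw [Real.norm_eq_abs, abs_of_nonneg h0]
        have hlt := (a j i).is_lt
        gcongr
        exact_mod_cast Nat.lt_succ_iff.mp hlt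
    have hclosed : ∀ k, IsClosed (C k) := by
      intro k
      have e1 : C k = (⋂ i : Fin m,
          {a : D | x i = ∑' j : ℕ, ((a j i : ℕ) : ℝ) / 3 ^ (j + 1)}) ∩
          (⋂ j : ℕ, ⋂ (_ : j < k), {a : D | goodv m n (a j)}) := by
        ext a
        simp only [hC, Set.mem_setOf_eq, Set.mem_inter_iff, Set.mem_iInter]
      rw [e1]
      refine IsClosed.inter (isClosed_iInter fun i => ?_)
        (isClosed_iInter fun j => isClosed_iInter fun _ => ?_)
      · have : {a : D | x i = ∑' j : ℕ, ((a j i : ℕ) : ℝ) / 3 ^ (j + 1)}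
            = (fun a : D => ∑' j : ℕ, ((a j i : ℕ) : ℝ) / 3 ^ (j + 1)) ⁻¹' {x i} := by
          ext a
          simp [eq_comm]
        rw [this]
        exact IsClosed.preimage (hcont i) isClosed_singleton
      · have : {a : D | goodv m n (a j)}
            = (fun a : D => a j) ⁻¹' {v : Fin m → Fin 3 | goodv m n v} := rfl
        rw [this]
        exact IsClosed.preimage (continuous_apply j) (isClosed_discrete _)
    have hcompact : IsCompact (C 0) := (hclosed 0).isCompact
    obtain ⟨a, ha⟩ := IsCompact.nonempty_iInter_of_sequence_nonempty_isCompact_isClosed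
      C hnested hne hcompact hclosed
    rw [Set.mem_iInter] at ha
    refine ⟨a, (ha 0).1, fun k => ?_⟩
    exact (ha (k+1)).2 k (Nat.lt_succ_self k)

lemma isConnected_iInter_of_nested {X : Type*} [TopologicalSpace X] [T2Space X]
    (T : ℕ → Set X) (hsub : ∀ k, T (k+1) ⊆ T k) (hcpt : ∀ k, IsCompact (T k))
    (hconn : ∀ k, IsConnected (T k)) : IsConnected (⋂ k, T k) := by
  have hcl : ∀ k, IsClosed (T k) := fun k => (hcpt k).isClosed
  have hne : (⋂ k, T k).Nonempty :=
    IsCompact.nonempty_iInter_of_sequence_nonempty_isCompact_isClosed T hsub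
      (fun k => (hconn k).nonempty) (hcpt 0) hcl
  refine ⟨hne, ?_⟩
  have hKcl : IsClosed (⋂ k, T k) := isClosed_iInter hcl
  rw [isPreconnected_iff_subset_of_fully_disjoint_closed hKcl]
  intro u v hu hv huv hdisj
  set K := ⋂ k, T k with hK
  have hKT0 : K ⊆ T 0 := Set.iInter_subset _ 0
  have hA : IsCompact (K ∩ u) :=
    (hcpt 0).of_isClosed_subset (hKcl.inter hu) (Set.inter_subset_left.trans hKT0)
  have hB : IsCompact (K ∩ v) :=
    (hcpt 0).of_isClosed_subset (hKcl.inter hv) (Set.inter_subset_left.trans hKT0)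
  have hdAB : Disjoint (K ∩ u) (K ∩ v) :=
    hdisj.mono Set.inter_subset_right Set.inter_subset_right
  obtain ⟨U, V, hUo, hVo, hAU, hBV, hUV⟩ :=
    SeparatedNhds.of_isCompact_isCompact_isClosed hA hB (hKcl.inter hv) hdAB
  have hKUV : K ⊆ U ∪ V := by
    intro y hy
    rcases huv hy with h | h
    · exact Or.inl (hAU ⟨hy, h⟩)
    · exact Or.inr (hBV ⟨hy, h⟩)
  have hex : ∃ k, T k ⊆ U ∪ V := by
    by_contra hcon
    push_neg at hcon
    have hne2 : ∀ k, (T k \ (U ∪ V)).Nonempty := by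
      intro k
      rcases Set.not_subset.mp (hcon k) with ⟨y, hy1, hy2⟩
      exact ⟨y, hy1, hy2⟩
    obtain ⟨y, hy⟩ := IsCompact.nonempty_iInter_of_sequence_nonempty_isCompact_isClosed
      (fun k => T k \ (U ∪ V)) (fun k => Set.diff_subset_diff_left (hsub k)) hne2
      ((hcpt 0).of_isClosed_subset ((hcl 0).sdiff (hUo.union hVo)) Set.diff_subset)
      (fun k => (hcl k).sdiff (hUo.union hVo))
    rw [Set.mem_iInter] at hy
    have hyK : y ∈ K := Set.mem_iInter.mpr (fun k => (hy k).1)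
    exact (hy 0).2 (hKUV hyK)
  obtain ⟨k, hk⟩ := hex
  have hKS : K ⊆ T k := Set.iInter_subset _ k
  have hnotboth : ¬(((T k) ∩ U).Nonempty ∧ ((T k) ∩ V).Nonempty) := by
    rintro ⟨hU1, hV1⟩
    obtain ⟨y, hy⟩ := (hconn k).isPreconnected U V hUo hVo hk hU1 hV1
    exact hUV.ne_of_mem hy.2.1 hy.2.2 rfl
  rw [not_and_or] at hnotboth
  rcases hnotboth with h | h
  · -- T k ∩ U empty, so K ∩ u = ∅, K ⊆ v
    right
    intro y hy
    rcases huv hy with hyu | hyv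
    · exact absurd ⟨hKS hy, hAU ⟨hy, hyu⟩⟩ (fun hc => h ⟨y, hc⟩)
    · exact hyv
  · left
    intro y hy
    rcases huv hy with hyu | hyv
    · exact hyu
    · exact absurd ⟨hKS hy, hBV ⟨hy, hyv⟩⟩ (fun hc => h ⟨y, hc⟩)

/-- For `1 ≤ n ≤ m` the Menger continuum `M^m_n` is a (nonempty) connected subset of
`ℝ^m`. -/
theorem mengerSet_isConnected (m n : ℕ) (hm : 1 ≤ m) (hn : 1 ≤ n) (hnm : n ≤ m) :
    IsConnected (mengerSet m n) := by
  rw [menger_eq_iInter]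
  exact isConnected_iInter_of_nested _ (S_antitone m n) (S_isCompact m n) (S_isConnected m n hn)
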